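/- Let m ≥ 1 and let L be a positive integer with 2m | L such that L/(2m) is even. Then the half-shifted correlation matrix for f(z) = z^m + z^{−m} satisfies G^{(z^m+z^{−m})}(L)_{jk} = 0 for all j,k ∈ {1,…,L} with j − k ≢ m (mod 2m); in particular all diagonal entries vanish. -/

import Mathlib

open scoped BigOperators Matrix

/-- `θ_k = (2π/L)(k - 1/2)` for `k = 1, …, L` (here `k : Fin L` is the 0-based index,
so `θ_k = (2π/L)(k + 1/2)`). -/
noncomputable def theta (L : ℕ) (k : Fin L) : ℝ :=
  2 * Real.pi / L * ((k : ℝ) + 1 / 2)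

/-- The half-shifted correlation matrix
`G^{(f)}(L)_{nm} = ((-1)^{n-m}/L) Σ_{k=1}^{L} (f(e^{iθ_k})/|f(e^{iθ_k})|) e^{iθ_k (n-m)}`. -/
noncomputable def Gf (L : ℕ) (f : ℂ → ℂ) : Matrix (Fin L) (Fin L) ℂ :=
  Matrix.of fun n m : Fin L =>
    (-1 : ℂ) ^ ((n : ℤ) - (m : ℤ)) / (L : ℂ) *
      ∑ k : Fin L,
        f (Complex.exp (Complex.I * (theta L k : ℂ))) /
            ((‖f (Complex.exp (Complex.I * (theta L k : ℂ)))‖) : ℂ) *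
          Complex.exp (Complex.I * (theta L k : ℂ) * (((n : ℤ) - (m : ℤ) : ℤ) : ℂ))

/-!
Shifting the index `k ↦ k + L/(2m)` permutes the sample points `z_k = e^{iθ_k}` and multiplies
each by `ζ = e^{iπ/m}`, a primitive `2m`-th root of unity with `ζ^m = -1`. This flips the sign of
`z^m + z^{-m}` (hence of its normalization) and multiplies `z^{j-k}` by `ζ^{j-k}`, so the sum `S`
defining the `(j, k)` entry satisfies `S = -ζ^{j-k} S`, and `-ζ^{j-k} ≠ 1` unless
`j - k ≡ m (mod 2m)`.
-/

open Complex
open scoped Real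

open Fin.NatCast in
theorem exp_I_mul_theta_add_natCast {L : ℕ} [NeZero L] (k : Fin L) (N : ℕ) :
    exp (I * theta L (k + N)) = exp (I * theta L k) * exp (2 * π * I * N / L) := by
  have hL : (L : ℂ) ≠ 0 := Nat.cast_ne_zero.mpr (NeZero.ne L)
  have hval : ((k + N : Fin L) : ℕ) = (k + N) % L := by
    rw [Fin.val_add, Fin.val_natCast, Nat.add_mod_mod]
  have hdecomp : ((k + N : ℕ) : ℂ) = L * ((k + N) / L : ℕ) + (((k + N) % L : ℕ) : ℂ) := by
    exact_mod_cast (Nat.div_add_mod (k + N) L).symm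
  rw [← exp_add, theta, theta, hval, ← mul_one (exp (I * _)),
    ← exp_nat_mul_two_pi_mul_I ((k + N) / L), ← exp_add]
  congr 1
  push_cast at hdecomp ⊢
  field_simp
  linear_combination (-2) * hdecomp

open Fin.NatCast in
theorem sum_exp_I_mul_theta_eq_zero {L : ℕ} [NeZero L] (N : ℕ) {g : ℂ → ℂ} {c : ℂ}
    (hc : c ≠ 1) (hg : ∀ z, g (z * exp (2 * π * I * N / L)) = c * g z) :
    ∑ k : Fin L, g (exp (I * theta L k)) = 0 := by
  set S := ∑ k : Fin L, g (exp (I * theta L k))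
  have hS : S = c * S := by
    calc S = ∑ k : Fin L, g (exp (I * theta L (k + N))) :=
          (Equiv.sum_comp (Equiv.addRight (N : Fin L)) _).symm
      _ = c * S := by
          simp only [exp_I_mul_theta_add_natCast, hg, S, Finset.mul_sum]
  have : (1 - c) * S = 0 := by linear_combination hS
  exact (mul_eq_zero.mp this).resolve_left (sub_ne_zero.mpr hc.symm)

theorem zpow_add_zpow_neg_mul {K : Type*} [Field K] {ζ : K} {n : ℤ} (hζ : ζ ^ n = -1) (z : K) :
    (z * ζ) ^ n + (z * ζ) ^ (-n) = -(z ^ n + z ^ (-n)) := by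
  simp only [mul_zpow, zpow_neg, hζ]
  ring

theorem sum_normalize_zpow_add_zpow_neg_mul_zpow_eq_zero {m L : ℕ} (hm : 1 ≤ m) (hL : 0 < L)
    (hdvd : 2 * m ∣ L) {d : ℤ} (hd : ¬ d ≡ m [ZMOD ((2 * m : ℕ) : ℤ)]) :
    ∑ k : Fin L,
      (exp (I * theta L k) ^ (m : ℤ) + exp (I * theta L k) ^ (-(m : ℤ))) /
          (‖exp (I * theta L k) ^ (m : ℤ) + exp (I * theta L k) ^ (-(m : ℤ))‖ : ℂ) *
        exp (I * theta L k) ^ d = 0 := by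
  have : NeZero L := ⟨hL.ne'⟩
  obtain ⟨N, rfl⟩ := hdvd
  set ζ := exp (2 * π * I * N / (2 * m * N : ℕ)) with hζdef
  have hζ : IsPrimitiveRoot ζ (2 * m) := by
    have hN : (N : ℂ) ≠ 0 := Nat.cast_ne_zero.mpr (by rintro rfl; simp at hL)
    convert isPrimitiveRoot_exp (2 * m) (by omega) using 2
    push_cast
    field_simp
  have hζm : ζ ^ (m : ℤ) = -1 := by
    have := hζ.pow_of_dvd (p := m) (by omega) (dvd_mul_left m 2)
    rw [Nat.mul_div_cancel _ (by omega)] at this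
    simpa using this.eq_neg_one_of_two_right
  refine sum_exp_I_mul_theta_eq_zero (L := 2 * m * N) N (c := -ζ ^ d)
    (g := fun z => (z ^ (m : ℤ) + z ^ (-(m : ℤ))) / (‖z ^ (m : ℤ) + z ^ (-(m : ℤ))‖ : ℂ) * z ^ d)
    ?_ fun z => ?_
  · intro h
    have hζd : ζ ^ (d - m) = 1 := by
      rw [zpow_sub₀ (hζ.ne_zero (by omega)), hζm, neg_eq_iff_eq_neg.mp h]
      norm_num
    exact hd (Int.modEq_iff_dvd.mpr ((hζ.zpow_eq_one_iff_dvd _).mp hζd)).symm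
  · rw [← hζdef, zpow_add_zpow_neg_mul hζm, norm_neg, neg_div, mul_zpow]
    ring

theorem selection_rule_zm_plus_zminv_general (m L : ℕ) (hm : 1 ≤ m) (hL : 0 < L)
    (hdvd : 2 * m ∣ L) :
    (∀ j k : Fin L, ¬ (((j : ℤ) - (k : ℤ)) ≡ (m : ℤ) [ZMOD ((2 * m : ℕ) : ℤ)]) →
      Gf L (fun z => z ^ (m : ℤ) + z ^ (-(m : ℤ))) j k = 0) ∧
    (∀ j : Fin L, Gf L (fun z => z ^ (m : ℤ) + z ^ (-(m : ℤ))) j j = 0) := by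
  have off_diag : ∀ j k : Fin L, ¬ (((j : ℤ) - (k : ℤ)) ≡ (m : ℤ) [ZMOD ((2 * m : ℕ) : ℤ)]) →
      Gf L (fun z => z ^ (m : ℤ) + z ^ (-(m : ℤ))) j k = 0 := by
    intro j k hjk
    simp only [Gf, Matrix.of_apply, mul_comm _ (((j : ℤ) - k : ℤ) : ℂ), exp_int_mul]
    rw [sum_normalize_zpow_add_zpow_neg_mul_zpow_eq_zero hm hL hdvd hjk, mul_zero]
  refine ⟨off_diag, fun j => off_diag j j ?_⟩
  rw [sub_self]
  intro h
  have := Int.le_of_dvd (by omega) h.dvd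
  omega

/-- **Selection rule for `f(z) = z^m + z^{-m}`.**  If `m ≥ 1`, `2m ∣ L` and
`L/(2m)` is even, then `G^{(z^m+z^{-m})}(L)_{jk} = 0` whenever
`j - k ≢ m (mod 2m)`; in particular all diagonal entries vanish. -/
theorem selection_rule_zm_plus_zminv (m L : ℕ) (hm : 1 ≤ m) (hL : 0 < L)
    (hdvd : 2 * m ∣ L) (hMeven : Even (L / (2 * m))) :
    (∀ j k : Fin L, ¬ (((j : ℤ) - (k : ℤ)) ≡ (m : ℤ) [ZMOD ((2 * m : ℕ) : ℤ)]) →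
      Gf L (fun z => z ^ (m : ℤ) + z ^ (-(m : ℤ))) j k = 0) ∧
    (∀ j : Fin L, Gf L (fun z => z ^ (m : ℤ) + z ^ (-(m : ℤ))) j j = 0) :=
  selection_rule_zm_plus_zminv_general m L hm hL hdvd
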